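/- Let d > 0 and let P₁, P₂, Q be edge sets with differentiable, non-decreasing, positive edge cost functions, such that τ_{P₁}(x) ≤ τ_{P₂}(x) and τ'_{P₁∩Q}(x) ≤ τ'_{P₂∩Q}(x) on [0,d]. Then for any x₁, x₂ ∈ [0,d] with x₁ ≤ x₂: τ_{P₁\Q}(x₁) + τ_{P₁∩Q}(d) ≤ τ_{P₂\Q}(x₂) + τ_{P₂∩Q}(d). -/

import Mathlib

/-! The gap `τ_{P₂∩Q} - τ_{P₁∩Q}` has non-negative derivative, hence is non-decreasing on `[0,d]`,
so `τ_{P₁∩Q}(d) - τ_{P₁∩Q}(x₁) ≤ τ_{P₂∩Q}(d) - τ_{P₂∩Q}(x₁)`. Adding this to `τ_{P₁}(x₁) ≤ τ_{P₂}(x₁)`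
gives the claim at `x₂ = x₁`, and monotonicity of `τ_{P₂\Q}` moves `x₁` up to `x₂`. -/

theorem monotoneOn_sub_of_deriv_le {f g : ℝ → ℝ} {D : Set ℝ} (hD : Convex ℝ D)
    (hf : Differentiable ℝ f) (hg : Differentiable ℝ g)
    (hfg : ∀ x ∈ interior D, deriv f x ≤ deriv g x) :
    MonotoneOn (fun x => g x - f x) D := by
  have hgf : Differentiable ℝ (fun x => g x - f x) := hg.sub hf
  refine monotoneOn_of_deriv_nonneg hD hgf.continuous.continuousOn
    hgf.differentiableOn fun x hx => ?_
  rw [deriv_fun_sub hg.differentiableAt hf.differentiableAt, sub_nonneg]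
  exact hfg x hx

theorem monotoneOn_sum_sub_sum_of_sum_deriv_le {E : Type*} {S T : Finset E} {τ : E → ℝ → ℝ}
    {D : Set ℝ} (hD : Convex ℝ D) (hdiff : ∀ e, Differentiable ℝ (τ e))
    (hST : ∀ x ∈ D, ∑ e ∈ S, deriv (τ e) x ≤ ∑ e ∈ T, deriv (τ e) x) :
    MonotoneOn (fun x => ∑ e ∈ T, τ e x - ∑ e ∈ S, τ e x) D := by
  refine monotoneOn_sub_of_deriv_le hD (Differentiable.fun_sum fun e _ => hdiff e)
    (Differentiable.fun_sum fun e _ => hdiff e) fun x hx => ?_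
  rw [deriv_fun_sum fun e _ => (hdiff e).differentiableAt,
    deriv_fun_sum fun e _ => (hdiff e).differentiableAt]
  exact hST x (interior_subset hx)

theorem stmt_13_general {E : Type*} [DecidableEq E] (d : ℝ)
    (P₁ P₂ Q : Finset E) (τ : E → ℝ → ℝ)
    (hdiff : ∀ e : E, Differentiable ℝ (τ e))
    (hmono : ∀ e : E, MonotoneOn (τ e) (Set.Icc 0 d))
    (hdom₁ : ∀ x ∈ Set.Icc (0 : ℝ) d, (∑ e ∈ P₁, τ e x) ≤ ∑ e ∈ P₂, τ e x)
    (hdom₂ : ∀ x ∈ Set.Icc (0 : ℝ) d,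
      (∑ e ∈ P₁ ∩ Q, deriv (τ e) x) ≤ ∑ e ∈ P₂ ∩ Q, deriv (τ e) x)
    (x₁ x₂ : ℝ) (hx₁ : x₁ ∈ Set.Icc (0 : ℝ) d) (hx₂ : x₂ ∈ Set.Icc (0 : ℝ) d)
    (hle : x₁ ≤ x₂) :
    (∑ e ∈ P₁ \ Q, τ e x₁) + (∑ e ∈ P₁ ∩ Q, τ e d) ≤
      (∑ e ∈ P₂ \ Q, τ e x₂) + (∑ e ∈ P₂ ∩ Q, τ e d) := by
  have hd : d ∈ Set.Icc (0 : ℝ) d := ⟨hx₁.1.trans hx₁.2, le_rfl⟩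
  have hgap := monotoneOn_sum_sub_sum_of_sum_deriv_le (convex_Icc 0 d) hdiff hdom₂ hx₁ hd hx₁.2
  have hrest : ∑ e ∈ P₂ \ Q, τ e x₁ ≤ ∑ e ∈ P₂ \ Q, τ e x₂ :=
    Finset.sum_le_sum fun e _ => hmono e hx₁ hx₂ hle
  have hsplit₁ := Finset.sum_inter_add_sum_sdiff P₁ Q (τ · x₁)
  have hsplit₂ := Finset.sum_inter_add_sum_sdiff P₂ Q (τ · x₁)
  linarith [hdom₁ x₁ hx₁]

/-- Core inequality (1): under dominance `P₁ ⪯ P₂`, for `x₁ ≤ x₂` in `[0,d]`,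
`τ_{P₁\Q}(x₁) + τ_{P₁∩Q}(d) ≤ τ_{P₂\Q}(x₂) + τ_{P₂∩Q}(d)`. -/
theorem stmt_13 {E : Type*} [DecidableEq E] (d : ℝ) (hd : 0 < d)
    (P₁ P₂ Q : Finset E) (τ : E → ℝ → ℝ)
    (hdiff : ∀ e : E, Differentiable ℝ (τ e))
    (hmono : ∀ e : E, MonotoneOn (τ e) (Set.Icc 0 d))
    (hpos : ∀ e : E, ∀ x ∈ Set.Icc (0 : ℝ) d, 0 < τ e x)
    (hdom₁ : ∀ x ∈ Set.Icc (0 : ℝ) d, (∑ e ∈ P₁, τ e x) ≤ ∑ e ∈ P₂, τ e x)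
    (hdom₂ : ∀ x ∈ Set.Icc (0 : ℝ) d,
      (∑ e ∈ P₁ ∩ Q, deriv (τ e) x) ≤ ∑ e ∈ P₂ ∩ Q, deriv (τ e) x)
    (x₁ x₂ : ℝ) (hx₁ : x₁ ∈ Set.Icc (0 : ℝ) d) (hx₂ : x₂ ∈ Set.Icc (0 : ℝ) d)
    (hle : x₁ ≤ x₂) :
    (∑ e ∈ P₁ \ Q, τ e x₁) + (∑ e ∈ P₁ ∩ Q, τ e d) ≤
      (∑ e ∈ P₂ \ Q, τ e x₂) + (∑ e ∈ P₂ ∩ Q, τ e d) :=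
  stmt_13_general d P₁ P₂ Q τ hdiff hmono hdom₁ hdom₂ x₁ x₂ hx₁ hx₂ hle
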